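/- arXiv:2011.01972 — 5 statements merged into one kernel-verified Lean document; each statement's English description precedes it below -/
import Mathlib

section
/- For any smooth function h(x,y) that is homogeneous of degree ν (i.e., h(x,y) = y^ν h(x/y,1)), the n×n determinant det[∂_x^{i-1} ∂_y^{j-1} h(x,y)] evaluated at y=1 equals (-1/x)^{n(n-1)/2} times the Hankel determinant det[(x∂_x)^{i+j-2} h(x,1)], for indices 1 ≤ i,j ≤ n. -/
open scoped BigOperators
open Finset

/-- The operator `x ∂_x`: multiplication by `x` after differentiation. -/
noncomputable def xdx (g : ℝ → ℝ) : ℝ → ℝ := fun t => t * deriv g t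

section aux

lemma smooth_deriv {g : ℝ → ℝ} (hg : ContDiff ℝ (⊤:ℕ∞) g) :
    ContDiff ℝ (⊤:ℕ∞) (deriv g) := by
  simpa using hg.iterate_deriv 1

lemma smooth_diff {g : ℝ → ℝ} (hg : ContDiff ℝ (⊤:ℕ∞) g) : Differentiable ℝ g :=
  hg.differentiable (by simp)

lemma smooth_xdx {g : ℝ → ℝ} (hg : ContDiff ℝ (⊤:ℕ∞) g) :
    ContDiff ℝ (⊤:ℕ∞) (xdx g) := by
  have := (contDiff_id.mul (smooth_deriv hg) : ContDiff ℝ (⊤:ℕ∞) fun t => id t * deriv g t)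
  exact this

lemma smooth_xdx_iter {g : ℝ → ℝ} (hg : ContDiff ℝ (⊤:ℕ∞) g) (m : ℕ) :
    ContDiff ℝ (⊤:ℕ∞) (xdx^[m] g) := by
  induction m with
  | zero => simpa using hg
  | succ m ih => rw [Function.iterate_succ_apply']; exact smooth_xdx ih

/-- iterated derivative of a finite linear combination of smooth functions -/
lemma iter_deriv_sum {ι : Type*} (i : ℕ) (s : Finset ι) (c : ι → ℝ) (g : ι → ℝ → ℝ)
    (hg : ∀ m ∈ s, ContDiff ℝ (⊤:ℕ∞) (g m)) (t : ℝ) :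
    deriv^[i] (fun u => ∑ m ∈ s, c m * g m u) t = ∑ m ∈ s, c m * deriv^[i] (g m) t := by
  induction i generalizing g with
  | zero => simp
  | succ i ih =>
      rw [Function.iterate_succ_apply]
      have hder : deriv (fun u => ∑ m ∈ s, c m * g m u)
          = fun u => ∑ m ∈ s, c m * deriv (g m) u := by
        funext u
        rw [deriv_fun_sum]
        · exact Finset.sum_congr rfl fun m hm =>
            deriv_const_mul (c m) ((smooth_diff (hg m hm)) u)
        · intro m hm
          exact ((smooth_diff (hg m hm)) u).const_mul _
      rw [hder, ih (fun m => deriv (g m)) (fun m hm => smooth_deriv (hg m hm))]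
      exact Finset.sum_congr rfl fun m _ => by
        rw [← Function.iterate_succ_apply deriv i (g m)]

/-- Expansion of `(x d/dx)^i` in terms of ordinary derivatives, with smooth
coefficient functions, leading coefficient `t^i`. -/
lemma xdx_iterate_expand (i : ℕ) :
    ∃ a : ℕ → ℝ → ℝ, (∀ k, ContDiff ℝ (⊤:ℕ∞) (a k)) ∧ (∀ t : ℝ, a i t = t ^ i) ∧
      (∀ k, i < k → ∀ t : ℝ, a k t = 0) ∧
      ∀ g : ℝ → ℝ, ContDiff ℝ (⊤:ℕ∞) g → ∀ t : ℝ,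
        xdx^[i] g t = ∑ k ∈ Finset.range (i+1), a k t * deriv^[k] g t := by
  induction i with
  | zero =>
      refine ⟨fun k t => if k = 0 then 1 else 0, ?_, ?_, ?_, ?_⟩
      · intro k
        by_cases hk : k = 0 <;> simp [hk] <;> exact contDiff_const
      · intro t; simp
      · intro k hk t
        have hk0 : k ≠ 0 := by omega
        simp [hk0]
      · intro g hg t; simp
  | succ i ih =>
      obtain ⟨a, ha_sm, ha_top, ha_zero, ha⟩ := ih
      have hzero_fun : a (i+1) = fun _ => (0:ℝ) := funext (ha_zero (i+1) (Nat.lt_succ_self i))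
      refine ⟨fun k t => t * deriv (a k) t + if k = 0 then 0 else t * a (k-1) t,
        ?_, ?_, ?_, ?_⟩
      · intro k
        cases k with
        | zero =>
            have : ContDiff ℝ (⊤:ℕ∞) fun t => t * deriv (a 0) t + 0 := by
              exact (contDiff_id.mul (smooth_deriv (ha_sm 0))).add contDiff_const
            simpa using this
        | succ k =>
            have : ContDiff ℝ (⊤:ℕ∞) fun t => t * deriv (a (k+1)) t + t * a k t :=
              (contDiff_id.mul (smooth_deriv (ha_sm (k+1)))).add (contDiff_id.mul (ha_sm k))
            simpa using this
      · intro t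
        have : deriv (a (i+1)) t = 0 := by rw [hzero_fun]; simp
        simp [this, ha_top t, pow_succ]
        ring
      · intro k hk t
        cases k with
        | zero => omega
        | succ k =>
            have h1 : a (k+1) = fun _ => (0:ℝ) := funext (ha_zero (k+1) (by omega))
            have h2 : a k t = 0 := ha_zero k (by omega) t
            simp [h1, h2]
      · intro g hg t
        rw [Function.iterate_succ_apply']
        have hfun : xdx^[i] g = fun s => ∑ k ∈ Finset.range (i+1), a k s * deriv^[k] g s :=
          funext (ha g hg)
        have hderiv : deriv (xdx^[i] g) t
            = ∑ k ∈ Finset.range (i+1),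
                (deriv (a k) t * deriv^[k] g t + a k t * deriv^[k+1] g t) := by
          rw [hfun, deriv_fun_sum]
          · refine Finset.sum_congr rfl fun k _ => ?_
            rw [deriv_fun_mul ((smooth_diff (ha_sm k)) t)
                ((smooth_diff (hg.iterate_deriv k)) t)]
            rw [← Function.iterate_succ_apply' deriv k g]
          · intro k _
            exact ((smooth_diff (ha_sm k)) t).mul ((smooth_diff (hg.iterate_deriv k)) t)
        show t * deriv (xdx^[i] g) t = _
        rw [hderiv, Finset.mul_sum]
        have hL : ∑ k ∈ Finset.range (i+1),
              t * (deriv (a k) t * deriv^[k] g t + a k t * deriv^[k+1] g t)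
            = (∑ k ∈ Finset.range (i+1), t * deriv (a k) t * deriv^[k] g t)
              + ∑ k ∈ Finset.range (i+1), t * a k t * deriv^[k+1] g t := by
          rw [← Finset.sum_add_distrib]
          exact Finset.sum_congr rfl fun k _ => by ring
        rw [hL]
        have hR1 : ∑ k ∈ Finset.range (i+2), t * deriv (a k) t * deriv^[k] g t
            = ∑ k ∈ Finset.range (i+1), t * deriv (a k) t * deriv^[k] g t := by
          rw [Finset.sum_range_succ]
          have : deriv (a (i+1)) t = 0 := by rw [hzero_fun]; simp
          simp [this]
        have hR2 : ∑ k ∈ Finset.range (i+2),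
              (if k = 0 then 0 else t * a (k-1) t) * deriv^[k] g t
            = ∑ k ∈ Finset.range (i+1), t * a k t * deriv^[k+1] g t := by
          rw [Finset.sum_range_succ' (fun k => (if k = 0 then 0 else t * a (k-1) t) * deriv^[k] g t) (i+1)]
          simp
        calc (∑ k ∈ Finset.range (i+1), t * deriv (a k) t * deriv^[k] g t)
              + ∑ k ∈ Finset.range (i+1), t * a k t * deriv^[k+1] g t
            = (∑ k ∈ Finset.range (i+2), t * deriv (a k) t * deriv^[k] g t)
              + ∑ k ∈ Finset.range (i+2),
                  (if k = 0 then 0 else t * a (k-1) t) * deriv^[k] g t := by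
              rw [hR1, hR2]
          _ = ∑ k ∈ Finset.range (i+2),
                (t * deriv (a k) t + if k = 0 then 0 else t * a (k-1) t) * deriv^[k] g t := by
              rw [← Finset.sum_add_distrib]
              exact Finset.sum_congr rfl fun k _ => by ring

/-- The operator sequence arising from `∂_y` applied to a homogeneous function. -/
noncomputable def Qop (ν : ℤ) : ℕ → (ℝ → ℝ) → (ℝ → ℝ)
  | 0, g => g
  | (j+1), g => fun t => ((ν : ℝ) - j) * Qop ν j g t - xdx (Qop ν j g) t

lemma smooth_Qop (ν : ℤ) (j : ℕ) {g : ℝ → ℝ} (hg : ContDiff ℝ (⊤:ℕ∞) g) :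
    ContDiff ℝ (⊤:ℕ∞) (Qop ν j g) := by
  induction j with
  | zero => exact hg
  | succ j ih =>
      show ContDiff ℝ (⊤:ℕ∞) fun t => ((ν : ℝ) - j) * Qop ν j g t - xdx (Qop ν j g) t
      exact (contDiff_const.mul ih).sub (smooth_xdx ih)

/-- Expansion of `Qop ν j` in terms of powers of `xdx`, leading coefficient `(-1)^j`. -/
lemma Qop_expand (ν : ℤ) (j : ℕ) (f : ℝ → ℝ) (hf : ContDiff ℝ (⊤:ℕ∞) f) :
    ∃ d : ℕ → ℝ, d j = (-1)^j ∧ (∀ m, j < m → d m = 0) ∧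
      ∀ t : ℝ, Qop ν j f t = ∑ m ∈ Finset.range (j+1), d m * xdx^[m] f t := by
  induction j with
  | zero =>
      exact ⟨fun m => if m = 0 then 1 else 0, by simp, fun m hm => if_neg (by omega),
        fun t => by simp [Qop]⟩
  | succ j ih =>
      obtain ⟨d, hd_top, hd_zero, hd⟩ := ih
      refine ⟨fun m => ((ν : ℝ) - j) * d m - (if m = 0 then 0 else d (m-1)), ?_, ?_, ?_⟩
      · simp [hd_zero (j+1) (Nat.lt_succ_self j), hd_top, pow_succ]
      · intro m hm
        cases m with
        | zero => omega
        | succ m => simp [hd_zero (m+1) (by omega), hd_zero m (by omega)]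
      · intro t
        have hfun : Qop ν j f = fun s => ∑ m ∈ Finset.range (j+1), d m * xdx^[m] f s :=
          funext hd
        have hxdx : xdx (Qop ν j f) t = ∑ m ∈ Finset.range (j+1), d m * xdx^[m+1] f t := by
          show t * deriv (Qop ν j f) t = _
          rw [hfun, deriv_fun_sum]
          · rw [Finset.mul_sum]
            refine Finset.sum_congr rfl fun m _ => ?_
            rw [deriv_const_mul (d m) ((smooth_diff (smooth_xdx_iter hf m)) t)]
            rw [Function.iterate_succ_apply' xdx m f]
            show t * (d m * deriv (xdx^[m] f) t) = d m * (t * deriv (xdx^[m] f) t)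
            ring
          · intro m _
            exact ((smooth_diff (smooth_xdx_iter hf m)) t).const_mul _
        show ((ν : ℝ) - j) * Qop ν j f t - xdx (Qop ν j f) t = _
        rw [hxdx, hd t]
        have hR1 : ∑ m ∈ Finset.range (j+2),
              (((ν : ℝ) - j) * d m) * xdx^[m] f t
            = ((ν : ℝ) - j) * ∑ m ∈ Finset.range (j+1), d m * xdx^[m] f t := by
          rw [Finset.sum_range_succ, hd_zero (j+1) (Nat.lt_succ_self j)]
          rw [Finset.mul_sum]
          simp [mul_assoc]
        have hR2 : ∑ m ∈ Finset.range (j+2),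
              (if m = 0 then 0 else d (m-1)) * xdx^[m] f t
            = ∑ m ∈ Finset.range (j+1), d m * xdx^[m+1] f t := by
          rw [Finset.sum_range_succ' (fun m => (if m = 0 then 0 else d (m-1)) * xdx^[m] f t) (j+1)]
          simp
        calc ((ν : ℝ) - j) * (∑ m ∈ Finset.range (j+1), d m * xdx^[m] f t)
              - ∑ m ∈ Finset.range (j+1), d m * xdx^[m+1] f t
            = (∑ m ∈ Finset.range (j+2), (((ν : ℝ) - j) * d m) * xdx^[m] f t)
              - ∑ m ∈ Finset.range (j+2), (if m = 0 then 0 else d (m-1)) * xdx^[m] f t := by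
              rw [hR1, hR2]
          _ = ∑ m ∈ Finset.range (j+2),
                (((ν : ℝ) - j) * d m - (if m = 0 then 0 else d (m-1))) * xdx^[m] f t := by
              rw [← Finset.sum_sub_distrib]
              exact Finset.sum_congr rfl fun m _ => by ring

/-- the key analytic claim: the iterated `y`-derivative of a homogeneous function -/
lemma y_deriv_homog (h : ℝ → ℝ → ℝ) (ν : ℤ)
    (hhom : ∀ x y : ℝ, y ≠ 0 → h x y = y ^ ν * h (x / y) 1)
    (hf : ContDiff ℝ (⊤:ℕ∞) (fun t => h t 1)) :
    ∀ (j : ℕ) (x y : ℝ), y ≠ 0 →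
      deriv^[j] (fun t : ℝ => h x t) y
        = y ^ (ν - j) * Qop ν j (fun t => h t 1) (x / y) := by
  intro j
  induction j with
  | zero =>
      intro x y hy
      simpa [Qop] using hhom x y hy
  | succ j ih =>
      intro x y hy
      rw [Function.iterate_succ_apply']
      have hev : deriv^[j] (fun t : ℝ => h x t)
          =ᶠ[nhds y] fun t => t ^ (ν - j) * Qop ν j (fun t => h t 1) (x / t) := by
        filter_upwards [eventually_ne_nhds hy] with t ht
        exact ih x t ht
      rw [hev.deriv_eq]
      set Qj := Qop ν j (fun t => h t 1) with hQj
      have hQsm : ContDiff ℝ (⊤:ℕ∞) Qj := smooth_Qop ν j hf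
      have hdiv : DifferentiableAt ℝ (fun t : ℝ => x / t) y := by
        simpa [div_eq_mul_inv] using (differentiableAt_inv hy).const_mul x
      have hcomp : DifferentiableAt ℝ (fun t : ℝ => Qj (x / t)) y :=
        ((smooth_diff hQsm) (x / y)).comp y hdiv
      have hderiv_div : deriv (fun t : ℝ => x / t) y = x * (-(y^2)⁻¹) := by
        have : (fun t : ℝ => x / t) = fun t => x * t⁻¹ := by
          funext t; rw [div_eq_mul_inv]
        rw [this, deriv_const_mul x (differentiableAt_inv hy), deriv_inv]
      have hderiv_comp : deriv (fun t : ℝ => Qj (x / t)) y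
          = deriv Qj (x / y) * (x * (-(y^2)⁻¹)) := by
        have := deriv_comp (h := fun t : ℝ => x / t) (h₂ := Qj) y
          ((smooth_diff hQsm) (x / y)) hdiv
        rw [← hderiv_div]
        exact this
      have hzp : DifferentiableAt ℝ (fun t : ℝ => t ^ (ν - j)) y :=
        (differentiableAt_zpow).2 (Or.inl hy)
      rw [deriv_fun_mul hzp hcomp, deriv_zpow, hderiv_comp]
      show (↑(ν - (j:ℤ)) * y ^ (ν - (j:ℤ) - 1)) * Qj (x / y)
            + y ^ (ν - (j:ℤ)) * (deriv Qj (x / y) * (x * (-(y^2)⁻¹)))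
          = y ^ (ν - ((j:ℕ)+1 : ℕ)) * (((ν:ℝ) - j) * Qj (x / y) - xdx Qj (x / y))
      have hcastexp : (ν - ((j:ℕ)+1 : ℕ) : ℤ) = ν - (j:ℤ) - 1 := by push_cast; ring
      rw [hcastexp]
      have hy2 : y ^ (ν - (j:ℤ)) = y ^ (ν - (j:ℤ) - 1) * y := by
        rw [← zpow_add_one₀ hy]; congr 1; ring
      rw [hy2]
      have hxdx : xdx Qj (x / y) = (x / y) * deriv Qj (x / y) := rfl
      rw [hxdx]
      have hcast : ((ν - (j:ℤ) : ℤ) : ℝ) = (ν:ℝ) - j := by push_cast; ring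
      rw [hcast]
      field_simp
      ring

end aux

/-- For a smooth function `h(x,y)` homogeneous of degree `ν`
(i.e. `h x y = y^ν * h (x/y) 1` for `y ≠ 0`), the `n × n` determinant of mixed partials
`∂_x^{i-1} ∂_y^{j-1} h(x,y)` evaluated at `y = 1` equals `(-1/x)^{n(n-1)/2}` times the
Hankel determinant `det[(x∂_x)^{i+j-2} h(x,1)]`, for `x ≠ 0`. -/
theorem det_mixed_partials_eq_hankel
    (h : ℝ → ℝ → ℝ) (hsm : ContDiff ℝ (⊤ : ℕ∞) (fun p : ℝ × ℝ => h p.1 p.2))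
    (ν : ℤ) (hhom : ∀ x y : ℝ, y ≠ 0 → h x y = y ^ ν * h (x / y) 1)
    (n : ℕ) (x : ℝ) (hx : x ≠ 0) :
    Matrix.det (Matrix.of fun i j : Fin n =>
        deriv^[(i : ℕ)] (fun s : ℝ => deriv^[(j : ℕ)] (fun t : ℝ => h s t) 1) x)
      = (-x⁻¹) ^ (n * (n - 1) / 2) *
        Matrix.det (Matrix.of fun i j : Fin n =>
          (xdx^[(i : ℕ) + (j : ℕ)]) (fun t : ℝ => h t 1) x) := by
  set f : ℝ → ℝ := fun t => h t 1 with hfdef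
  have hsm' : ContDiff ℝ (⊤:ℕ∞) (fun p : ℝ × ℝ => h p.1 p.2) := hsm.of_le (by simp)
  have hf : ContDiff ℝ (⊤:ℕ∞) f := by
    have : ContDiff ℝ (⊤:ℕ∞) ((fun p : ℝ × ℝ => h p.1 p.2) ∘ (fun t : ℝ => (t, (1:ℝ)))) :=
      hsm'.comp (contDiff_id.prodMk contDiff_const)
    exact this
  -- columns: inner functions are Qop ν j f
  have hcol : ∀ j : ℕ, (fun s : ℝ => deriv^[j] (fun t : ℝ => h s t) 1) = Qop ν j f := by
    intro j
    funext s
    rw [y_deriv_homog h ν hhom hf j s 1 one_ne_zero]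
    simp [hfdef]
  -- choose column expansion coefficients
  choose d hd_top hd_zero hd_sum using fun j : Fin n => Qop_expand ν (j:ℕ) f hf
  -- choose row expansion coefficients
  choose a ha_sm ha_top ha_zero ha_sum using fun i : Fin n => xdx_iterate_expand (i:ℕ)
  set N := n * (n - 1) / 2 with hN
  set B : Matrix (Fin n) (Fin n) ℝ :=
    Matrix.of (fun i m : Fin n => deriv^[(i:ℕ)] (xdx^[(m:ℕ)] f) x) with hB
  set C : Matrix (Fin n) (Fin n) ℝ := Matrix.of (fun m j : Fin n => d j (m:ℕ)) with hC
  set A : Matrix (Fin n) (Fin n) ℝ := Matrix.of (fun i k : Fin n => a i (k:ℕ) x) with hA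
  -- the mixed-partials matrix equals B * C
  have hM : (Matrix.of fun i j : Fin n =>
      deriv^[(i : ℕ)] (fun s : ℝ => deriv^[(j : ℕ)] (fun t : ℝ => h s t) 1) x) = B * C := by
    ext i j
    rw [Matrix.mul_apply]
    show deriv^[(i:ℕ)] (fun s : ℝ => deriv^[(j:ℕ)] (fun t : ℝ => h s t) 1) x
        = ∑ m : Fin n, B i m * C m j
    rw [hcol (j:ℕ)]
    have hQfun : Qop ν (j:ℕ) f = fun u => ∑ m ∈ Finset.range ((j:ℕ)+1), d j m * xdx^[m] f u :=
      funext (hd_sum j)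
    rw [hQfun]
    rw [iter_deriv_sum (i:ℕ) _ _ _ (fun m _ => smooth_xdx_iter hf m) x]
    have hsub : ∑ m ∈ Finset.range ((j:ℕ)+1), d j m * deriv^[(i:ℕ)] (xdx^[m] f) x
        = ∑ m ∈ Finset.range n, d j m * deriv^[(i:ℕ)] (xdx^[m] f) x := by
      refine Finset.sum_subset ?_ ?_
      · intro m hm
        rw [Finset.mem_range] at hm ⊢
        omega
      · intro m _ hm
        rw [Finset.mem_range] at hm
        rw [hd_zero j m (by omega)]
        ring
    rw [hsub, ← Fin.sum_univ_eq_sum_range (fun m => d j m * deriv^[(i:ℕ)] (xdx^[m] f) x) n]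
    exact Finset.sum_congr rfl fun m _ => by
      show d j (m:ℕ) * deriv^[(i:ℕ)] (xdx^[(m:ℕ)] f) x = B i m * C m j
      rw [hB, hC]; simp [Matrix.of_apply]; ring
  -- the Hankel matrix equals A * B
  have hH : (Matrix.of fun i j : Fin n =>
      (xdx^[(i : ℕ) + (j : ℕ)]) (fun t : ℝ => h t 1) x) = A * B := by
    ext i j
    rw [Matrix.mul_apply]
    show xdx^[(i:ℕ)+(j:ℕ)] f x = ∑ k : Fin n, A i k * B k j
    rw [Function.iterate_add_apply]
    rw [ha_sum i (xdx^[(j:ℕ)] f) (smooth_xdx_iter hf (j:ℕ)) x]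
    have hsub : ∑ k ∈ Finset.range ((i:ℕ)+1), a i k x * deriv^[k] (xdx^[(j:ℕ)] f) x
        = ∑ k ∈ Finset.range n, a i k x * deriv^[k] (xdx^[(j:ℕ)] f) x := by
      refine Finset.sum_subset ?_ ?_
      · intro k hk
        rw [Finset.mem_range] at hk ⊢
        omega
      · intro k _ hk
        rw [Finset.mem_range] at hk
        rw [ha_zero i k (by omega) x]
        ring
    rw [hsub, ← Fin.sum_univ_eq_sum_range (fun k => a i k x * deriv^[k] (xdx^[(j:ℕ)] f) x) n]
    exact Finset.sum_congr rfl fun k _ => by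
      show a i (k:ℕ) x * deriv^[(k:ℕ)] (xdx^[(j:ℕ)] f) x = A i k * B k j
      rw [hA, hB]; simp [Matrix.of_apply]
  -- triangularity and determinants
  have hdetC : C.det = (-1 : ℝ) ^ N := by
    have htri : C.BlockTriangular id := by
      intro i j hij
      exact hd_zero j (i:ℕ) (by exact_mod_cast hij)
    rw [Matrix.det_of_upperTriangular htri]
    have : ∀ j : Fin n, C j j = (-1 : ℝ) ^ (j:ℕ) := fun j => hd_top j
    calc ∏ j : Fin n, C j j = ∏ j : Fin n, (-1 : ℝ) ^ (j:ℕ) :=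
          Finset.prod_congr rfl fun j _ => this j
      _ = (-1 : ℝ) ^ (∑ j : Fin n, (j:ℕ)) := Finset.prod_pow_eq_pow_sum _ _ _
      _ = (-1 : ℝ) ^ N := by
          rw [hN, ← Finset.sum_range_id, Fin.sum_univ_eq_sum_range (fun m => m) n]
  have hdetA : A.det = x ^ N := by
    have htri : A.BlockTriangular OrderDual.toDual := by
      intro i j hij
      exact ha_zero i (j:ℕ) (by exact_mod_cast hij) x
    rw [Matrix.det_of_lowerTriangular A htri]
    have : ∀ i : Fin n, A i i = x ^ (i:ℕ) := fun i => ha_top i x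
    calc ∏ i : Fin n, A i i = ∏ i : Fin n, x ^ (i:ℕ) :=
          Finset.prod_congr rfl fun i _ => this i
      _ = x ^ (∑ i : Fin n, (i:ℕ)) := Finset.prod_pow_eq_pow_sum _ _ _
      _ = x ^ N := by
          rw [hN, ← Finset.sum_range_id, Fin.sum_univ_eq_sum_range (fun m => m) n]
  rw [hM, hH, Matrix.det_mul, Matrix.det_mul, hdetC, hdetA]
  have hkey : (-x⁻¹) ^ N * x ^ N = (-1 : ℝ) ^ N := by
    rw [← mul_pow]
    congr 1
    field_simp
  calc B.det * (-1:ℝ) ^ N = ((-x⁻¹) ^ N * x ^ N) * B.det := by rw [hkey]; ring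
    _ = (-x⁻¹) ^ N * (x ^ N * B.det) := by ring
end

section
/- The n-th derivative of the function x ↦ 1/((x-1)^a x^b) is given by ∂_x^n [(x-1)^{-a} x^{-b}] = (b)_n (x-1)^{-a-n} x^{-b-n} · ₂F₁(-n, -n-a-b+1; -n-b+1; x), where (b)_n is the Pochhammer symbol, valid for b not equal to 0, -1, …, -n+1, and x ∉ {0,1}. -/
/-!
By Leibniz's rule the `n`-th derivative is
`∑ᵢ C(n,i) [-a]ᵢ [-b]ₙ₋ᵢ (x-1)^(-a-i) x^(-b-n+i)` with falling factorials `[y]ₖ`.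
Factor out `(x-1)^(-a-n) x^(-b-n)`, expand `(x-1)^(n-i)` binomially and collect powers of `x`:
the coefficient of `x^m` is a Chu–Vandermonde sum, equal to
`(-1)^(n-m) C(n,m) [-b]ₙ₋ₘ [-a-b-(n-m)]ₘ`. Turning falling into rising factorials, this is the
`m`-th term of `(b)ₙ ₂F₁(-n, 1-n-a-b; 1-n-b; x)`, whose denominators `(1-n-b)ₘ` do not vanish
since `b ∉ {0, -1, …, 1-n}`.
-/

open scoped BigOperators

/-- The terminating Gauss hypergeometric series `₂F₁(-n, b; c; x)`
(a polynomial of degree `n` in `x`), written with rising factorials. -/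
noncomputable def F21term (n : ℕ) (b c x : ℝ) : ℝ :=
  ∑ k ∈ Finset.range (n + 1),
    (ascPochhammer ℝ k).eval (-(n : ℝ)) * (ascPochhammer ℝ k).eval b /
      (ascPochhammer ℝ k).eval c * x ^ k / (Nat.factorial k : ℝ)

open Finset Polynomial

section Pochhammer

variable {R : Type*} [CommRing R]

theorem descPochhammer_smeval_eq_eval (r : R) (k : ℕ) :
    (descPochhammer ℤ k).smeval r = (descPochhammer R k).eval r := by
  rw [descPochhammer_smeval_eq_ascPochhammer, ascPochhammer_smeval_eq_eval,
    descPochhammer_eval_eq_ascPochhammer]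

theorem descPochhammer_eval_add (r s : R) (m : ℕ) :
    (descPochhammer R m).eval (r + s) = ∑ k ∈ range (m + 1),
      (m.choose k : R) * (descPochhammer R k).eval r * (descPochhammer R (m - k)).eval s := by
  rw [← descPochhammer_smeval_eq_eval, Ring.descPochhammer_smeval_add m (Commute.all r s),
    Nat.sum_antidiagonal_eq_sum_range_succ
      (fun i j => (m.choose i : R) * ((descPochhammer ℤ i).smeval r * (descPochhammer ℤ j).smeval s))]
  simp only [descPochhammer_smeval_eq_eval, mul_assoc]

theorem descPochhammer_add_eval (r : R) (p q : ℕ) :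
    (descPochhammer R (p + q)).eval r
      = (descPochhammer R p).eval r * (descPochhammer R q).eval (r - p) := by
  rw [← descPochhammer_mul, eval_mul, eval_comp, eval_sub, eval_X, eval_natCast]

theorem sum_choose_mul_descPochhammer_mul_choose (α β : R) {n m : ℕ} (hm : m ≤ n) :
    ∑ k ∈ range (m + 1), (n.choose k : R) * (descPochhammer R k).eval α
        * (descPochhammer R (n - k)).eval β * ((n - k).choose (m - k) : R)
      = (n.choose m : R) * (descPochhammer R (n - m)).eval β
        * (descPochhammer R m).eval (α + (β - (n - m : ℕ))) := by
  rw [descPochhammer_eval_add, mul_sum]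
  refine sum_congr rfl fun k hk => ?_
  have hkm : k ≤ m := Nat.lt_succ_iff.mp (mem_range.mp hk)
  have hchoose : (n.choose k : R) * ((n - k).choose (m - k) : R)
      = (n.choose m : R) * (m.choose k : R) := by
    rw [← Nat.cast_mul, ← Nat.cast_mul, Nat.choose_mul hkm]
  have hsplit : (descPochhammer R (n - k)).eval β
      = (descPochhammer R (n - m)).eval β * (descPochhammer R (m - k)).eval (β - (n - m : ℕ)) := by
    rw [← descPochhammer_add_eval, show n - m + (m - k) = n - k by omega]
  rw [hsplit]
  linear_combination (descPochhammer R k).eval α * (descPochhammer R (n - m)).eval β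
    * (descPochhammer R (m - k)).eval (β - (n - m : ℕ)) * hchoose

theorem sum_choose_mul_descPochhammer_mul_sub_one_pow (α β x : R) (n : ℕ) :
    ∑ i ∈ range (n + 1), (n.choose i : R) * (descPochhammer R i).eval α
        * (descPochhammer R (n - i)).eval β * ((x - 1) ^ (n - i) * x ^ i)
      = ∑ m ∈ range (n + 1), (-1) ^ (n - m) * (n.choose m : R) * (descPochhammer R (n - m)).eval β
        * (descPochhammer R m).eval (α + (β - (n - m : ℕ))) * x ^ m := by
  set c : ℕ → R := fun i => (n.choose i : R) * (descPochhammer R i).eval α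
    * (descPochhammer R (n - i)).eval β
  calc ∑ i ∈ range (n + 1), c i * ((x - 1) ^ (n - i) * x ^ i)
      = ∑ i ∈ range (n + 1), ∑ j ∈ range (n + 1 - i),
          c i * ((n - i).choose j * (-1) ^ (n - i - j) * x ^ (i + j)) := by
        refine sum_congr rfl fun i hi => ?_
        rw [sub_eq_add_neg, add_pow, sum_mul, mul_sum,
          show n - i + 1 = n + 1 - i by have := mem_range.mp hi; omega]
        refine sum_congr rfl fun j _ => ?_
        ring
    _ = ∑ m ∈ range (n + 1), ∑ k ∈ range (m + 1),
          c k * ((n - k).choose (m - k) * (-1) ^ (n - k - (m - k)) * x ^ (k + (m - k))) :=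
        (sum_range_diag_flip (n + 1) _).symm
    _ = _ := by
        refine sum_congr rfl fun m hm => ?_
        have hmn : m ≤ n := Nat.lt_succ_iff.mp (mem_range.mp hm)
        calc _ = ∑ k ∈ range (m + 1), (-1) ^ (n - m) * x ^ m * ((n.choose k : R)
                * (descPochhammer R k).eval α * (descPochhammer R (n - k)).eval β
                * ((n - k).choose (m - k) : R)) := by
              refine sum_congr rfl fun k hk => ?_
              have hkm : k ≤ m := Nat.lt_succ_iff.mp (mem_range.mp hk)
              rw [show n - k - (m - k) = n - m by omega, show k + (m - k) = m by omega]
              ring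
          _ = _ := by
              rw [← mul_sum, sum_choose_mul_descPochhammer_mul_choose α β hmn]
              ring

theorem ascPochhammer_eval_neg_sub_add_one_ne_zero [IsDomain R] {n m : ℕ} {b : R}
    (hb : ∀ k : ℕ, k < n → b ≠ -(k : R)) (hm : m ≤ n) :
    (ascPochhammer R m).eval (-(n : R) - b + 1) ≠ 0 := by
  rw [Ne, ascPochhammer_eval_eq_zero_iff]
  rintro ⟨k, hkm, hk⟩
  refine hb (n - 1 - k) (by omega) ?_
  rw [Nat.cast_sub (by omega), Nat.cast_sub (by omega)]
  linear_combination -hk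

end Pochhammer

section Field

variable {K : Type*} [Field K] [CharZero K]

theorem ascPochhammer_mul_hypergeometric_coeff (a b x : K) {n m : ℕ} (hm : m ≤ n)
    (hd : (ascPochhammer K m).eval (-(n : K) - b + 1) ≠ 0) :
    (ascPochhammer K n).eval b * ((ascPochhammer K m).eval (-(n : K))
        * (ascPochhammer K m).eval (-(n : K) - a - b + 1) / (ascPochhammer K m).eval (-(n : K) - b + 1)
        * x ^ m / (m.factorial : K))
      = (-1) ^ (n - m) * (n.choose m : K) * (descPochhammer K (n - m)).eval (-b)
        * (descPochhammer K m).eval (-a + (-b - (n - m : ℕ))) * x ^ m := by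
  have hcast : ((n - m : ℕ) : K) = n - m := Nat.cast_sub hm
  have hnegn : (ascPochhammer K m).eval (-(n : K)) = (-1) ^ m * m.factorial * n.choose m := by
    rw [ascPochhammer_eval_neg_eq_descPochhammer, descPochhammer_eval_eq_descFactorial,
      Nat.descFactorial_eq_factorial_mul_choose]
    push_cast
    ring
  have hnum : (ascPochhammer K m).eval (-(n : K) - a - b + 1)
      = (descPochhammer K m).eval (-a + (-b - (n - m : ℕ))) := by
    rw [descPochhammer_eval_eq_ascPochhammer, hcast]
    ring_nf
  have hden : (ascPochhammer K m).eval (-(n : K) - b + 1)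
      = (descPochhammer K m).eval (-b - (n - m : ℕ)) := by
    rw [descPochhammer_eval_eq_ascPochhammer, hcast]
    ring_nf
  have hprefactor : (ascPochhammer K n).eval b = (-1) ^ (n - m) * (-1) ^ m
      * (descPochhammer K (n - m)).eval (-b) * (descPochhammer K m).eval (-b - (n - m : ℕ)) := by
    rw [← pow_add, Nat.sub_add_cancel hm, mul_assoc, ← descPochhammer_add_eval,
      Nat.sub_add_cancel hm, ← ascPochhammer_eval_neg_eq_descPochhammer, neg_neg]
  have hfac : (m.factorial : K) ≠ 0 := Nat.cast_ne_zero.mpr m.factorial_ne_zero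
  rw [hden] at hd ⊢
  rw [hnegn, hnum, hprefactor]
  field_simp
  rw [← pow_mul, pow_mul', neg_one_sq, one_pow, one_mul]

end Field

theorem iteratedDeriv_rpow_const (r x : ℝ) (k : ℕ) :
    iteratedDeriv k (fun t => t ^ r) x = (descPochhammer ℝ k).eval r * x ^ (r - k) := by
  rw [iteratedDeriv_eq_iterate]
  exact Real.iter_deriv_rpow_const r x k

theorem iteratedDeriv_sub_rpow_const (c r x : ℝ) (k : ℕ) :
    iteratedDeriv k (fun t => (t - c) ^ r) x = (descPochhammer ℝ k).eval r * (x - c) ^ (r - k) := by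
  rw [iteratedDeriv_comp_sub_const k (fun t => t ^ r) c]
  exact iteratedDeriv_rpow_const r (x - c) k

theorem iteratedDeriv_sub_one_rpow_mul_rpow (α β : ℝ) (n : ℕ) {x : ℝ} (hx0 : x ≠ 0)
    (hx1 : x - 1 ≠ 0) :
    iteratedDeriv n (fun t => (t - 1) ^ α * t ^ β) x
      = (x - 1) ^ (α - n) * x ^ (β - n) * ∑ i ∈ range (n + 1), (n.choose i : ℝ)
        * (descPochhammer ℝ i).eval α * (descPochhammer ℝ (n - i)).eval β
        * ((x - 1) ^ (n - i) * x ^ i) := by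
  have hleft_smooth : ContDiffAt ℝ n (fun t : ℝ => (t - 1) ^ α) x :=
    (Real.contDiffAt_rpow_const_of_ne hx1).comp x (contDiffAt_id.sub contDiffAt_const)
  rw [iteratedDeriv_fun_mul hleft_smooth (Real.contDiffAt_rpow_const_of_ne hx0), mul_sum]
  refine sum_congr rfl fun i hi => ?_
  have hin : i ≤ n := Nat.lt_succ_iff.mp (mem_range.mp hi)
  have hleft : (x - 1) ^ (α - i) = (x - 1) ^ (α - n) * (x - 1) ^ (n - i) := by
    rw [← Real.rpow_add_natCast hx1, Nat.cast_sub hin]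
    ring_nf
  have hright : x ^ (β - (n - i : ℕ)) = x ^ (β - n) * x ^ i := by
    rw [← Real.rpow_add_natCast hx0, Nat.cast_sub hin]
    ring_nf
  rw [iteratedDeriv_sub_rpow_const, iteratedDeriv_rpow_const, hleft, hright]
  ring

/-- The `n`-th derivative of `x ↦ (x-1)^{-a} x^{-b}` equals
`(b)_n (x-1)^{-a-n} x^{-b-n} ₂F₁(-n, -n-a-b+1; -n-b+1; x)`, valid for
`b ∉ {0, -1, …, -(n-1)}` and `x ∉ {0,1}` (stated here for `x > 1` where the real
powers are unambiguous). -/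
theorem iteratedDeriv_rpow_prod (n : ℕ) (a b : ℝ)
    (hb : ∀ k : ℕ, k < n → b ≠ -(k : ℝ)) (x : ℝ) (hx1 : 1 < x) :
    iteratedDeriv n (fun t : ℝ => (t - 1) ^ (-a) * t ^ (-b)) x
      = (ascPochhammer ℝ n).eval b * (x - 1) ^ (-a - (n : ℝ)) * x ^ (-b - (n : ℝ)) *
        F21term n (-(n : ℝ) - a - b + 1) (-(n : ℝ) - b + 1) x := by
  calc _ = (x - 1) ^ (-a - n) * x ^ (-b - n) * ∑ m ∈ range (n + 1), (-1) ^ (n - m)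
          * (n.choose m : ℝ) * (descPochhammer ℝ (n - m)).eval (-b)
          * (descPochhammer ℝ m).eval (-a + (-b - (n - m : ℕ))) * x ^ m := by
        rw [iteratedDeriv_sub_one_rpow_mul_rpow _ _ _ (by positivity) (by linarith),
          sum_choose_mul_descPochhammer_mul_sub_one_pow]
    _ = _ := by
        rw [F21term, mul_sum, mul_sum]
        refine sum_congr rfl fun m hm => ?_
        have hmn : m ≤ n := Nat.lt_succ_iff.mp (mem_range.mp hm)
        rw [← ascPochhammer_mul_hypergeometric_coeff a b x hmn
          (ascPochhammer_eval_neg_sub_add_one_ne_zero hb hmn)]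
        ring
end

section
/- Let f(v,u) = Δv²/(v²-u²) and g(v,u) = Δvu/(v²-u²). Suppose operators A(u), B(u) on a vector space satisfy A(v)B(u) = f(v,u)B(u)A(v) + g(u,v)B(v)A(u), mutually commuting B's, and A(u)|Ω⟩ = a(u)|Ω⟩ for a vector |Ω⟩. Then A(u_{n+1}) ∏_{j=1}^n B(u_j)|Ω⟩ = ∑_{i=1}^{n+1} a(u_i) [g(u_i,u_{n+1})/f(u_i,u_{n+1})] ∏_{j≠i, 1≤j≤n+1} f(u_i,u_j) ∏_{j≠i, 1≤j≤n+1} B(u_j)|Ω⟩. -/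
/-!
Induction on the number of `B`'s. Moving `A(v)` through `B(w)` by the exchange relation gives a
wanted term, in which `A` keeps its argument, and an unwanted term, in which the arguments are
swapped. Gathering the unwanted terms that end with the same missing index `i`, their
coefficients combine by the three-point identity
`f(v,w) g(x,v) + g(w,v) g(x,w) = g(x,v) f(x,w)` (for pairwise distinct `x, v, w`), which for
the given `f`, `g` is an identity of rational functions. Finally
`g(u_i,u_{n+1}) = (u_{n+1}/u_i) f(u_i,u_{n+1})`, so the wanted term is the `i = n+1` summand.
-/

open Function

namespace BetheAnsatz

variable {ι R V : Type*} [DecidableEq ι] [CommRing R] [AddCommGroup V] [Module R V]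

def prodB (B : ι → Module.End R V) (hB : Pairwise (Commute on B)) (S : Finset ι) :
    Module.End R V :=
  S.noncommProd B (hB.set_pairwise _)

variable {A B : ι → Module.End R V} {hB : Pairwise (Commute on B)} {a : ι → R}
  {f g : ι → ι → R} {Ω : V}

lemma prodB_insert {S : Finset ι} {k : ι} (hk : k ∉ S) :
    prodB B hB (insert k S) = B k * prodB B hB S :=
  Finset.noncommProd_insert_of_notMem _ _ _ _ hk

theorem apply_prodB_apply
    (hAB : ∀ i j, i ≠ j → A i * B j = f i j • (B j * A i) + g j i • (B i * A j))
    (hfg : ∀ i j k, i ≠ j → i ≠ k → j ≠ k → f j k * g i j + g k j * g i k = g i j * f i k)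
    (hΩ : ∀ i, A i Ω = a i • Ω) (S : Finset ι) {l : ι} (hl : l ∉ S) :
    A l (prodB B hB S Ω) = (a l * ∏ j ∈ S, f l j) • prodB B hB S Ω
      + ∑ i ∈ S, (a i * g i l * ∏ j ∈ S.erase i, f i j) • B l (prodB B hB (S.erase i) Ω) := by
  induction S using Finset.induction_on generalizing l with
  | empty => simp [prodB, hΩ]
  | @insert k T hk ih =>
    obtain ⟨hlk, hlT⟩ : l ≠ k ∧ l ∉ T := by simpa using hl
    have hunwanted : ∀ i ∈ T,
        (a i * g i l * ∏ j ∈ (insert k T).erase i, f i j) •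
            B l (prodB B hB ((insert k T).erase i) Ω)
          = f l k • (a i * g i l * ∏ j ∈ T.erase i, f i j) • B k (B l (prodB B hB (T.erase i) Ω))
            + g k l • (a i * g i k * ∏ j ∈ T.erase i, f i j) •
                B l (B k (prodB B hB (T.erase i) Ω)) := by
      intro i hi
      have hki : k ≠ i := fun h => hk (h ▸ hi)
      have hkT : k ∉ T.erase i := fun h => hk (Finset.mem_of_mem_erase h)
      have hBkl : ∀ x, B k (B l x) = B l (B k x) := LinearMap.congr_fun (hB hlk.symm).eq
      rw [Finset.erase_insert_of_ne hki, prodB_insert hkT, Finset.prod_insert hkT,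
        Module.End.mul_apply, hBkl, smul_smul, smul_smul, ← add_smul]
      congr 1
      linear_combination
        -(a i * ∏ j ∈ T.erase i, f i j) * hfg i l k (fun h => hlT (h ▸ hi)) hki.symm hlk
    rw [prodB_insert hk, Module.End.mul_apply, ← Module.End.mul_apply (A l), hAB l k hlk,
      Finset.prod_insert hk, Finset.sum_insert hk, Finset.erase_insert hk,
      Finset.sum_congr rfl hunwanted, Finset.sum_add_distrib]
    simp only [LinearMap.add_apply, LinearMap.smul_apply, Module.End.mul_apply, ih hlT, ih hk,
      map_add, map_smul, map_sum, smul_add, Finset.smul_sum, smul_smul]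
    module

theorem apply_prodB_erase_apply [Fintype ι]
    (hAB : ∀ i j, i ≠ j → A i * B j = f i j • (B j * A i) + g j i • (B i * A j))
    (hfg : ∀ i j k, i ≠ j → i ≠ k → j ≠ k → f j k * g i j + g k j * g i k = g i j * f i k)
    (hΩ : ∀ i, A i Ω = a i • Ω) (l : ι) (c : ι → R) (hcl : c l = 1)
    (hgc : ∀ i, i ≠ l → g i l = c i * f i l) :
    A l (prodB B hB (Finset.univ.erase l) Ω)
      = ∑ i, (a i * c i * ∏ j ∈ Finset.univ.erase i, f i j) •
          prodB B hB (Finset.univ.erase i) Ω := by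
  rw [apply_prodB_apply hAB hfg hΩ _ (Finset.notMem_erase l _),
    ← Finset.add_sum_erase _ _ (Finset.mem_univ l), hcl, mul_one]
  congr 1
  refine Finset.sum_congr rfl fun i hi => ?_
  have hil : i ≠ l := Finset.ne_of_mem_erase hi
  have hl : l ∉ (Finset.univ.erase l).erase i := by simp
  have herase : Finset.univ.erase i = insert l ((Finset.univ.erase l).erase i) := by
    rw [Finset.erase_right_comm, Finset.insert_erase (by simpa using hil.symm)]
  rw [herase, prodB_insert hl, Finset.prod_insert hl, Module.End.mul_apply, hgc i hil]
  congr 1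
  ring

end BetheAnsatz

lemma sq_exchange_identity {K : Type*} [Field K] (Δ x v w : K)
    (hvw : v ^ 2 ≠ w ^ 2) (hxw : x ^ 2 ≠ w ^ 2) (hxv : x ^ 2 ≠ v ^ 2) :
    Δ * v ^ 2 / (v ^ 2 - w ^ 2) * (Δ * x * v / (x ^ 2 - v ^ 2))
      + Δ * w * v / (w ^ 2 - v ^ 2) * (Δ * x * w / (x ^ 2 - w ^ 2))
      = Δ * x * v / (x ^ 2 - v ^ 2) * (Δ * x ^ 2 / (x ^ 2 - w ^ 2)) := by
  have : v ^ 2 - w ^ 2 ≠ 0 := sub_ne_zero.mpr hvw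
  have : w ^ 2 - v ^ 2 ≠ 0 := sub_ne_zero.mpr hvw.symm
  have : x ^ 2 - w ^ 2 ≠ 0 := sub_ne_zero.mpr hxw
  have : x ^ 2 - v ^ 2 ≠ 0 := sub_ne_zero.mpr hxv
  field_simp
  ring

/-- Action of the `A`-operator on an off-shell Bethe state.
With `f(v,u) = Δv²/(v²-u²)`, `g(v,u) = Δvu/(v²-u²)` (and using
`g(u_i,u_{n+1})/f(u_i,u_{n+1}) = u_{n+1}/u_i`, valid also in the diagonal term since
`f(u,u)/g(u,u) = 1`), if `A(v)B(u) = f(v,u)B(u)A(v) + g(u,v)B(v)A(u)`, the `B`'s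
mutually commute, and `A(u)|Ω⟩ = a(u)|Ω⟩`, then
`A(u_{n+1}) ∏_{j=1}^n B(u_j)|Ω⟩ = ∑_{i=1}^{n+1} a(u_i)(u_{n+1}/u_i) ∏_{j≠i} f(u_i,u_j)
∏_{j≠i} B(u_j)|Ω⟩`. -/
theorem A_on_off_shell_Bethe {K V : Type*} [Field K] [AddCommGroup V] [Module K V]
    (Δ : K) (Aop Bop : K → Module.End K V) (a : K → K) (Ω : V)
    (hAB : ∀ v w : K, Aop v * Bop w
      = (Δ * v ^ 2 / (v ^ 2 - w ^ 2)) • (Bop w * Aop v)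
        + (Δ * w * v / (w ^ 2 - v ^ 2)) • (Bop v * Aop w))
    (hBB : ∀ v w : K, Commute (Bop v) (Bop w))
    (heig : ∀ w : K, Aop w Ω = a w • Ω)
    (n : ℕ) (u : Fin (n + 1) → K) (hu0 : ∀ i, u i ≠ 0)
    (husq : ∀ i j, i ≠ j → u i ^ 2 ≠ u j ^ 2) :
    (Aop (u (Fin.last n)))
        (((Finset.univ.erase (Fin.last n)).noncommProd (fun j => Bop (u j))
            (fun i _ j _ _ => hBB (u i) (u j))) Ω)
      = ∑ i : Fin (n + 1),
          (a (u i) * (u (Fin.last n) / u i) *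
              ∏ j ∈ Finset.univ.erase i, (Δ * (u i) ^ 2 / ((u i) ^ 2 - (u j) ^ 2))) •
            (((Finset.univ.erase i).noncommProd (fun j => Bop (u j))
                (fun i' _ j' _ _ => hBB (u i') (u j'))) Ω) := by
  have hgc : ∀ i, i ≠ Fin.last n → Δ * u i * u (Fin.last n) / (u i ^ 2 - u (Fin.last n) ^ 2)
      = u (Fin.last n) / u i * (Δ * u i ^ 2 / (u i ^ 2 - u (Fin.last n) ^ 2)) := by
    intro i _
    field_simp [hu0 i]
  exact BetheAnsatz.apply_prodB_erase_apply (B := fun i => Bop (u i))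
    (hB := fun i j _ => hBB (u i) (u j)) (fun i j _ => hAB (u i) (u j))
    (fun i j k hij hik hjk => sq_exchange_identity Δ (u i) (u j) (u k)
      (husq j k hjk) (husq i k hik) (husq i j hij))
    (fun i => heig (u i)) (Fin.last n) _ (div_self (hu0 _)) hgc
end

section
/- For smooth functions ã(x), d̃(x) with d̃ nonvanishing, and integers n, m ≥ 0 with L = 2n+m, define the L×L block matrix Q̃ with entries Q̃_{ij} = d̃^{(j-i)}/(j-i)! for rows i = 1,…,n and Q̃_{ij} = ã^{(n+j-i)}/(n+j-i)! for rows i = n+1,…,L, with the convention that negative-order derivatives give 0. Then det Q̃ = (-1)^{(L-n)(L-n-1)/2} d̃^L det_{1≤i,j≤L-n}[(ã/d̃)^{(i+j-1-L+2n)}/(i+j-1-L+2n)!]. -/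
open scoped BigOperators
open Finset

lemma revPerm_eq_aux (n : ℕ) :
    (Fin.revPerm : Equiv.Perm (Fin (n+1))) =
      Equiv.Perm.decomposeFin.symm (0, (Fin.revPerm : Equiv.Perm (Fin n))) * finRotate (n+1) := by
  ext i
  refine Fin.lastCases ?_ (fun y => ?_) i
  · simp [finRotate_last, Fin.rev_last]
  · rw [Equiv.Perm.mul_apply, finRotate_succ_apply, Fin.coeSucc_eq_succ,
      Equiv.Perm.decomposeFin_symm_apply_succ, Equiv.swap_self]
    simp [Fin.rev_castSucc]

lemma sign_revPerm_aux (M : ℕ) :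
    Equiv.Perm.sign (Fin.revPerm : Equiv.Perm (Fin M)) = (-1 : ℤˣ)^(M*(M-1)/2) := by
  induction M with
  | zero => simp [Subsingleton.elim (Fin.revPerm : Equiv.Perm (Fin 0)) 1]
  | succ n ih =>
    rw [revPerm_eq_aux, map_mul, Equiv.Perm.decomposeFin.symm_sign, ih, sign_finRotate]
    rw [if_pos rfl, one_mul, ← pow_add]
    congr 1
    have h : (n + 1) * (n + 1 - 1) = n * (n - 1) + 2 * n := by
      cases n with
      | zero => rfl
      | succ k => simp only [Nat.add_sub_cancel]; ring
    omega

lemma choose_shuffle_aux (a b : ℕ → ℝ) (N : ℕ) :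
    ∑ k ∈ range (N+1), (N.choose k : ℝ) * (a (k+1) * b (N-k) + a k * b (N-k+1))
      = ∑ k ∈ range (N+2), ((N+1).choose k : ℝ) * (a k * b (N+1-k)) := by
  have hR : ∑ k ∈ range (N+2), ((N+1).choose k : ℝ) * (a k * b (N+1-k))
      = (∑ j ∈ range (N+1), ((N.choose j : ℝ) + (N.choose (j+1) : ℝ)) * (a (j+1) * b (N-j)))
        + a 0 * b (N+1) := by
    rw [Finset.sum_range_succ']
    congr 1
    · refine Finset.sum_congr rfl fun j hj => ?_
      rw [Nat.choose_succ_succ, Nat.succ_sub_succ]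
      push_cast
      ring
    · simp
  rw [hR]
  have hL2 : ∑ k ∈ range (N+1), (N.choose k : ℝ) * (a k * b (N-k+1))
      = (∑ j ∈ range (N+1), (N.choose (j+1) : ℝ) * (a (j+1) * b (N-j))) + a 0 * b (N+1) := by
    have h1 : ∑ k ∈ range (N+1), (N.choose k : ℝ) * (a k * b (N-k+1))
        = ∑ k ∈ range (N+1), (N.choose k : ℝ) * (a k * b (N+1-k)) := by
      refine Finset.sum_congr rfl fun k hk => ?_
      rw [Nat.sub_add_comm (Nat.lt_succ_iff.mp (Finset.mem_range.mp hk))]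
    rw [h1, Finset.sum_range_succ']
    congr 1
    · rw [Finset.sum_range_succ, Nat.choose_succ_self]
      simp only [Nat.cast_zero, zero_mul, add_zero]
      refine Finset.sum_congr rfl fun j hj => ?_
      rw [Nat.succ_sub_succ]
    · simp
  calc ∑ k ∈ range (N+1), (N.choose k : ℝ) * (a (k+1) * b (N-k) + a k * b (N-k+1))
      = (∑ k ∈ range (N+1), (N.choose k : ℝ) * (a (k+1) * b (N-k)))
        + ∑ k ∈ range (N+1), (N.choose k : ℝ) * (a k * b (N-k+1)) := by
        rw [← Finset.sum_add_distrib]; refine Finset.sum_congr rfl fun k _ => by ring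
    _ = _ := by rw [hL2, ← add_assoc, ← Finset.sum_add_distrib]
                congr 1
                refine Finset.sum_congr rfl fun k _ => by ring

lemma leibniz_iteratedDeriv_aux (f g : ℝ → ℝ) (hf : ContDiff ℝ (⊤ : ℕ∞) f) (hg : ContDiff ℝ (⊤ : ℕ∞) g) (N : ℕ) :
    iteratedDeriv N (fun t => f t * g t) = fun x =>
      ∑ k ∈ range (N+1), (N.choose k : ℝ) * (iteratedDeriv k f x * iteratedDeriv (N-k) g x) := by
  induction N with
  | zero => funext x; simp
  | succ N ih =>
    funext x
    have hdf : ∀ (k : ℕ) (y : ℝ), DifferentiableAt ℝ (iteratedDeriv k f) y := fun k y =>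
      (hf.differentiable_iteratedDeriv k (by exact_mod_cast lt_top_iff_ne_top.mpr (by simp))) y
    have hdg : ∀ (k : ℕ) (y : ℝ), DifferentiableAt ℝ (iteratedDeriv k g) y := fun k y =>
      (hg.differentiable_iteratedDeriv k (by exact_mod_cast lt_top_iff_ne_top.mpr (by simp))) y
    rw [iteratedDeriv_succ, ih]
    rw [deriv_fun_sum (fun k _ => (show DifferentiableAt ℝ (fun y => (N.choose k : ℝ) * (iteratedDeriv k f y * iteratedDeriv (N-k) g y)) x from ((hdf k x).mul (hdg (N-k) x)).const_mul _))]
    have hterm : ∀ k ∈ range (N+1),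
        deriv (fun y => (N.choose k : ℝ) * (iteratedDeriv k f y * iteratedDeriv (N-k) g y)) x
        = (N.choose k : ℝ) * (iteratedDeriv (k+1) f x * iteratedDeriv (N-k) g x
            + iteratedDeriv k f x * iteratedDeriv (N-k+1) g x) := by
      intro k _
      rw [deriv_const_mul _ (show DifferentiableAt ℝ (fun y => iteratedDeriv k f y * iteratedDeriv (N-k) g y) x from (hdf k x).mul (hdg (N-k) x)),
        deriv_fun_mul (hdf k x) (hdg (N-k) x)]
      simp only [← iteratedDeriv_succ]
    rw [Finset.sum_congr rfl hterm]
    exact choose_shuffle_aux (fun k => iteratedDeriv k f x) (fun k => iteratedDeriv k g x) N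

lemma leibniz_norm_aux (f g : ℝ → ℝ) (hf : ContDiff ℝ (⊤ : ℕ∞) f) (hg : ContDiff ℝ (⊤ : ℕ∞) g) (N : ℕ) (x : ℝ) :
    iteratedDeriv N (fun t => f t * g t) x / (Nat.factorial N : ℝ) =
      ∑ k ∈ range (N+1), (iteratedDeriv k f x / (Nat.factorial k : ℝ)) *
        (iteratedDeriv (N-k) g x / (Nat.factorial (N-k) : ℝ)) := by
  rw [leibniz_iteratedDeriv_aux f g hf hg N]
  simp only [Finset.sum_div]
  refine Finset.sum_congr rfl fun k hk => ?_
  have hk' : k ≤ N := Nat.lt_succ_iff.mp (Finset.mem_range.mp hk)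
  have hfac : ((N.choose k : ℕ) : ℝ) * (Nat.factorial k : ℝ) * (Nat.factorial (N-k) : ℝ)
      = (Nat.factorial N : ℝ) := by
    exact_mod_cast congrArg (Nat.cast (R := ℝ)) (Nat.choose_mul_factorial_mul_factorial hk')
  have h1 : (Nat.factorial k : ℝ) ≠ 0 := Nat.cast_ne_zero.mpr (Nat.factorial_ne_zero k)
  have h2 : (Nat.factorial (N-k) : ℝ) ≠ 0 := Nat.cast_ne_zero.mpr (Nat.factorial_ne_zero _)
  have h3 : (Nat.factorial N : ℝ) ≠ 0 := Nat.cast_ne_zero.mpr (Nat.factorial_ne_zero N)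
  field_simp
  rw [← hfac]
  ring

lemma det_block_aux (n m : ℕ) (d q a : ℝ → ℝ) (hd : ContDiff ℝ (⊤ : ℕ∞) d) (hq : ContDiff ℝ (⊤ : ℕ∞) q)
    (haq : (fun t => q t * d t) = a) (x : ℝ) :
    Matrix.det (Matrix.of fun i j : Fin (2 * n + m) =>
        if (i : ℕ) < n then
          (if (i : ℕ) ≤ (j : ℕ) then
            iteratedDeriv ((j : ℕ) - (i : ℕ)) d x /
              (Nat.factorial ((j : ℕ) - (i : ℕ)) : ℝ) else 0)
        else
          (if (i : ℕ) ≤ n + (j : ℕ) then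
            iteratedDeriv (n + (j : ℕ) - (i : ℕ)) a x /
              (Nat.factorial (n + (j : ℕ) - (i : ℕ)) : ℝ) else 0))
      = (-1 : ℝ) ^ ((n + m) * (n + m - 1) / 2) * (d x) ^ (2 * n + m) *
        Matrix.det (Matrix.of fun i j : Fin (n + m) =>
          if m ≤ (i : ℕ) + (j : ℕ) + 1 then
            iteratedDeriv ((i : ℕ) + (j : ℕ) + 1 - m) q x /
              (Nat.factorial ((i : ℕ) + (j : ℕ) + 1 - m) : ℝ)
          else 0) := by
  classical
  set L := 2 * n + m with hLdef
  set M := n + m with hMdef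
  have hnL : n ≤ L := by omega
  set D : Matrix (Fin L) (Fin L) ℝ :=
    Matrix.of (fun k j : Fin L => if (k : ℕ) ≤ (j : ℕ) then
      iteratedDeriv ((j : ℕ) - (k : ℕ)) d x / (Nat.factorial ((j : ℕ) - (k : ℕ)) : ℝ) else 0)
    with hDdef
  set R : Matrix (Fin L) (Fin L) ℝ :=
    Matrix.of (fun i k : Fin L =>
      if (i : ℕ) < n then (if k = i then (1 : ℝ) else 0)
      else (if (i : ℕ) ≤ n + (k : ℕ) then
        iteratedDeriv (n + (k : ℕ) - (i : ℕ)) q x /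
          (Nat.factorial (n + (k : ℕ) - (i : ℕ)) : ℝ) else 0)) with hRdef
  set H : Matrix (Fin M) (Fin M) ℝ :=
    Matrix.of (fun i j : Fin M =>
      if m ≤ (i : ℕ) + (j : ℕ) + 1 then
        iteratedDeriv ((i : ℕ) + (j : ℕ) + 1 - m) q x /
          (Nat.factorial ((i : ℕ) + (j : ℕ) + 1 - m) : ℝ) else 0) with hHdef
  set B : Matrix (Fin M) (Fin M) ℝ :=
    Matrix.of (fun p r : Fin M =>
      if (p : ℕ) ≤ n + (r : ℕ) then
        iteratedDeriv (n + (r : ℕ) - (p : ℕ)) q x /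
          (Nat.factorial (n + (r : ℕ) - (p : ℕ)) : ℝ) else 0) with hBdef
  -- Step 1 : Q = R * D
  have hQ : (Matrix.of fun i j : Fin L =>
        if (i : ℕ) < n then
          (if (i : ℕ) ≤ (j : ℕ) then
            iteratedDeriv ((j : ℕ) - (i : ℕ)) d x /
              (Nat.factorial ((j : ℕ) - (i : ℕ)) : ℝ) else 0)
        else
          (if (i : ℕ) ≤ n + (j : ℕ) then
            iteratedDeriv (n + (j : ℕ) - (i : ℕ)) a x /
              (Nat.factorial (n + (j : ℕ) - (i : ℕ)) : ℝ) else 0)) = R * D := by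
    ext i j
    rw [Matrix.mul_apply]
    simp only [hRdef, hDdef, Matrix.of_apply]
    symm
    by_cases hi : (i : ℕ) < n
    · simp only [if_pos hi]
      rw [Fintype.sum_eq_single i (fun b hb => by rw [if_neg hb, zero_mul])]
      rw [if_pos rfl, one_mul]
    · simp only [if_neg hi]
      rw [← haq]
      have hn : n ≤ (i : ℕ) := le_of_not_gt hi
      by_cases hij : (i : ℕ) ≤ n + (j : ℕ)
      · rw [if_pos hij]
        set N := n + (j : ℕ) - (i : ℕ) with hNdef
        set p := (i : ℕ) - n with hpdef
        have hpj : p ≤ (j : ℕ) := by omega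
        have hjL : (j : ℕ) < L := j.isLt
        calc (∑ k : Fin L,
              (if (i : ℕ) ≤ n + (k : ℕ) then
                iteratedDeriv (n + (k : ℕ) - (i : ℕ)) q x /
                  (Nat.factorial (n + (k : ℕ) - (i : ℕ)) : ℝ) else 0) *
              (if (k : ℕ) ≤ (j : ℕ) then
                iteratedDeriv ((j : ℕ) - (k : ℕ)) d x /
                  (Nat.factorial ((j : ℕ) - (k : ℕ)) : ℝ) else 0))
            = ∑ k ∈ range L,
              (if (i : ℕ) ≤ n + k then
                iteratedDeriv (n + k - (i : ℕ)) q x /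
                  (Nat.factorial (n + k - (i : ℕ)) : ℝ) else 0) *
              (if k ≤ (j : ℕ) then
                iteratedDeriv ((j : ℕ) - k) d x /
                  (Nat.factorial ((j : ℕ) - k) : ℝ) else 0) :=
              Fin.sum_univ_eq_sum_range (fun k =>
                (if (i : ℕ) ≤ n + k then iteratedDeriv (n + k - (i : ℕ)) q x /
                  (Nat.factorial (n + k - (i : ℕ)) : ℝ) else 0) *
                (if k ≤ (j : ℕ) then iteratedDeriv ((j : ℕ) - k) d x /
                  (Nat.factorial ((j : ℕ) - k) : ℝ) else 0)) L
          _ = ∑ k ∈ Finset.Ico p L,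
              (if (i : ℕ) ≤ n + k then
                iteratedDeriv (n + k - (i : ℕ)) q x /
                  (Nat.factorial (n + k - (i : ℕ)) : ℝ) else 0) *
              (if k ≤ (j : ℕ) then
                iteratedDeriv ((j : ℕ) - k) d x /
                  (Nat.factorial ((j : ℕ) - k) : ℝ) else 0) := by
              refine (Finset.sum_subset (fun k hk => ?_) (fun k hk1 hk2 => ?_)).symm
              · rw [Finset.mem_Ico] at hk; rw [Finset.mem_range]; omega
              · rw [Finset.mem_range] at hk1
                rw [Finset.mem_Ico, not_and_or] at hk2
                rw [if_neg (by omega), zero_mul]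
          _ = ∑ k ∈ range (L - p),
              (if (i : ℕ) ≤ n + (p + k) then
                iteratedDeriv (n + (p + k) - (i : ℕ)) q x /
                  (Nat.factorial (n + (p + k) - (i : ℕ)) : ℝ) else 0) *
              (if (p + k) ≤ (j : ℕ) then
                iteratedDeriv ((j : ℕ) - (p + k)) d x /
                  (Nat.factorial ((j : ℕ) - (p + k)) : ℝ) else 0) :=
              Finset.sum_Ico_eq_sum_range (fun k =>
                (if (i : ℕ) ≤ n + k then iteratedDeriv (n + k - (i : ℕ)) q x /
                  (Nat.factorial (n + k - (i : ℕ)) : ℝ) else 0) *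
                (if k ≤ (j : ℕ) then iteratedDeriv ((j : ℕ) - k) d x /
                  (Nat.factorial ((j : ℕ) - k) : ℝ) else 0)) p L
          _ = ∑ k ∈ range (L - p),
              (if k ≤ N then
                (iteratedDeriv k q x / (Nat.factorial k : ℝ)) *
                (iteratedDeriv (N - k) d x / (Nat.factorial (N - k) : ℝ)) else 0) := by
              refine Finset.sum_congr rfl fun k _ => ?_
              rw [if_pos (by omega), show n + (p + k) - (i : ℕ) = k from by omega]
              by_cases hkN : k ≤ N
              · rw [if_pos (by omega : p + k ≤ (j : ℕ)), if_pos hkN,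
                  show (j : ℕ) - (p + k) = N - k from by omega]
              · rw [if_neg (by omega : ¬ p + k ≤ (j : ℕ)), if_neg hkN, mul_zero]
          _ = ∑ k ∈ range (N + 1),
              (if k ≤ N then
                (iteratedDeriv k q x / (Nat.factorial k : ℝ)) *
                (iteratedDeriv (N - k) d x / (Nat.factorial (N - k) : ℝ)) else 0) := by
              refine (Finset.sum_subset (fun k hk => ?_) (fun k hk1 hk2 => ?_)).symm
              · rw [Finset.mem_range] at *; omega
              · rw [Finset.mem_range] at hk1 hk2
                rw [if_neg (by omega)]
          _ = ∑ k ∈ range (N + 1),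
              (iteratedDeriv k q x / (Nat.factorial k : ℝ)) *
                (iteratedDeriv (N - k) d x / (Nat.factorial (N - k) : ℝ)) := by
              refine Finset.sum_congr rfl fun k hk => ?_
              rw [Finset.mem_range] at hk
              rw [if_pos (by omega)]
          _ = iteratedDeriv N (fun t => q t * d t) x / (Nat.factorial N : ℝ) :=
              (leibniz_norm_aux q d hq hd N x).symm
      · rw [if_neg hij]
        refine Finset.sum_eq_zero fun k _ => ?_
        by_cases hkj : (k : ℕ) ≤ (j : ℕ)
        · rw [if_neg (by omega), zero_mul]
        · rw [if_neg hkj, mul_zero]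
  -- Step 2 : det D
  have hdetD : D.det = (d x) ^ L := by
    rw [Matrix.det_of_upperTriangular (M := D) (fun i j (hji : j < i) => by
      simp only [hDdef, Matrix.of_apply]
      rw [if_neg (by exact Nat.not_le.mpr hji)])]
    have : ∀ i : Fin L, D i i = d x := fun i => by
      simp [hDdef, iteratedDeriv_zero, Nat.factorial]
    rw [Finset.prod_congr rfl (fun i _ => this i)]
    simp
  -- Step 3 : det R = det B
  have heq : n + M = L := by omega
  set e : (Fin n ⊕ Fin M) ≃ Fin L := finSumFinEquiv.trans (finCongr heq) with hedef
  have he1 : ∀ b : Fin n, ((e (Sum.inl b)) : ℕ) = (b : ℕ) := fun b => by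
    simp [hedef]
  have he2 : ∀ p : Fin M, ((e (Sum.inr p)) : ℕ) = n + (p : ℕ) := fun p => by
    simp [hedef]
  set Cm : Matrix (Fin M) (Fin n) ℝ :=
    Matrix.of (fun p b : _ =>
      if n + (p : ℕ) ≤ n + (b : ℕ) then
        iteratedDeriv (n + (b : ℕ) - (n + (p : ℕ))) q x /
          (Nat.factorial (n + (b : ℕ) - (n + (p : ℕ))) : ℝ) else 0) with hCmdef
  have hRblocks : R.submatrix e e = Matrix.fromBlocks 1 0 Cm B := by
    ext i k
    cases i with
    | inl b =>
      cases k with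
      | inl b' =>
        simp only [Matrix.submatrix_apply, hRdef, Matrix.of_apply, Matrix.fromBlocks_apply₁₁]
        rw [if_pos (by rw [he1]; exact b.isLt)]
        rw [Matrix.one_apply]
        by_cases h : b = b'
        · rw [if_pos (by rw [h]), if_pos h]
        · rw [if_neg (fun hc => h (by
            have := e.injective hc
            exact (Sum.inl.injEq _ _ ▸ this).symm)), if_neg h]
      | inr r =>
        simp only [Matrix.submatrix_apply, hRdef, Matrix.of_apply, Matrix.fromBlocks_apply₁₂,
          Matrix.zero_apply]
        rw [if_pos (by rw [he1]; exact b.isLt)]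
        rw [if_neg (fun hc => by
          have := congrArg (Fin.val) hc
          rw [he1, he2] at this
          omega)]
    | inr p =>
      cases k with
      | inl b =>
        simp only [Matrix.submatrix_apply, hRdef, Matrix.of_apply, Matrix.fromBlocks_apply₂₁,
          hCmdef]
        rw [if_neg (by rw [he2]; omega), he2, he1]
      | inr r =>
        simp only [Matrix.submatrix_apply, hRdef, Matrix.of_apply, Matrix.fromBlocks_apply₂₂,
          hBdef]
        rw [if_neg (by rw [he2]; omega), he2, he2]
        by_cases h : (p : ℕ) ≤ n + (r : ℕ)
        · rw [if_pos (by omega), if_pos h,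
            show n + (n + (r : ℕ)) - (n + (p : ℕ)) = n + (r : ℕ) - (p : ℕ) from by omega]
        · rw [if_neg (by omega), if_neg h]
  have hdetR : R.det = B.det := by
    rw [← Matrix.det_submatrix_equiv_self e R, hRblocks,
      Matrix.det_fromBlocks_zero₁₂, Matrix.det_one, one_mul]
  -- Step 4 : det B = sign * det H
  have hBH : B = H.submatrix Fin.revPerm id := by
    ext p r
    simp only [Matrix.submatrix_apply, id_eq, hBdef, hHdef, Matrix.of_apply, Fin.revPerm_apply]
    have hr : ((Fin.rev p : Fin M) : ℕ) = M - ((p : ℕ) + 1) := Fin.val_rev p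
    have hpM : (p : ℕ) < M := p.isLt
    by_cases h : (p : ℕ) ≤ n + (r : ℕ)
    · rw [if_pos h, if_pos (by rw [hr]; omega), hr,
        show M - ((p : ℕ) + 1) + (r : ℕ) + 1 - m = n + (r : ℕ) - (p : ℕ) from by omega]
    · rw [if_neg h, if_neg (by rw [hr]; omega)]
  have hdetB : B.det = (-1 : ℝ) ^ (M * (M - 1) / 2) * H.det := by
    rw [hBH, Matrix.det_permute, sign_revPerm_aux]
    norm_num
  -- assemble
  rw [hQ, Matrix.det_mul, hdetD, hdetR, hdetB]
  ring

/-- **Schur-complement reduction to a Hankel determinant.**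
For smooth `ã`, `d̃` with `d̃` nonvanishing and `L = 2n + m`, the `L×L` matrix `Q̃`
with rows `d̃^{(j-i)}/(j-i)!` (for `i = 1,…,n`, entries with `j < i` being `0`) and
`ã^{(n+j-i)}/(n+j-i)!` (for `i = n+1,…,L`, negative orders giving `0`) satisfies
`det Q̃ = (-1)^{(L-n)(L-n-1)/2} d̃^L · det_{1≤i,j≤L-n}[(ã/d̃)^{(i+j-1-m)}/(i+j-1-m)!]`
(entries with `i+j-1-m < 0` being `0`; indices below are zero-based). -/
theorem det_block_toeplitz_eq_hankel (n m : ℕ) (da aa : ℝ → ℝ)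
    (hd : ContDiff ℝ (⊤ : ℕ∞) da) (ha : ContDiff ℝ (⊤ : ℕ∞) aa) (hd0 : ∀ t, da t ≠ 0) (x : ℝ) :
    Matrix.det (Matrix.of fun i j : Fin (2 * n + m) =>
        if (i : ℕ) < n then
          (if (i : ℕ) ≤ (j : ℕ) then
            iteratedDeriv ((j : ℕ) - (i : ℕ)) da x /
              (Nat.factorial ((j : ℕ) - (i : ℕ)) : ℝ) else 0)
        else
          (if (i : ℕ) ≤ n + (j : ℕ) then
            iteratedDeriv (n + (j : ℕ) - (i : ℕ)) aa x /
              (Nat.factorial (n + (j : ℕ) - (i : ℕ)) : ℝ) else 0))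
      = (-1 : ℝ) ^ ((n + m) * (n + m - 1) / 2) * (da x) ^ (2 * n + m) *
        Matrix.det (Matrix.of fun i j : Fin (n + m) =>
          if m ≤ (i : ℕ) + (j : ℕ) + 1 then
            iteratedDeriv ((i : ℕ) + (j : ℕ) + 1 - m) (fun t => aa t / da t) x /
              (Nat.factorial ((i : ℕ) + (j : ℕ) + 1 - m) : ℝ)
          else 0) :=
  det_block_aux n m da (fun t => aa t / da t) aa hd (ha.div hd hd0)
    (funext fun t => div_mul_cancel₀ (aa t) (hd0 t)) x
end

section
/- For distinct nonzero u₁,…,u_{2n}, set ã_j = a(u_j)u_j^{2n-1}, d̃_j = d(u_j)u_j, and let Q be the n×n matrix with entries Q_{ij} = (d̃_{2n-i+1} ã_j - d̃_j ã_{2n-i+1})/(u_j² - u_{2n-i+1}²), and let V be the 2n×2n matrix with entries V_{ij} = d̃_j u_j^{2(i-1)} for i ≤ n and V_{ij} = ã_j u_j^{2(i-n-1)} for i > n. Then ∏_{1≤i<j≤2n} (u_j² - u_i²)^{-1} det V = ∏_{1≤j<k≤n} (u_k² - u_j²)^{-1}(u_{n+k}² - u_{n+j}²)^{-1} det Q.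 -/
/-!
Let `x` and `y` be the squares of the first and of the last `n` of the `u_j`, and `Wx`, `Wy` their
Vandermonde matrices. Lagrange interpolation on the nodes `x` gives `Wxᵀ * B = Wyᵀ` with
`B k j = ℓ_k (y j)`, so the `2n × 2n` matrix is `diag(Wxᵀ, Wxᵀ)` times a block matrix with diagonal
left blocks, whose determinant is `det (D_f B D_g - D_g B D_f)`. By the barycentric formula for
`ℓ_k (y j)` this is the product of the nodal weights, of `∏ (y j - x k)` and of the determinant of
the `n × n` matrix, up to the sign of the row reversal. The nodal weights multiply to
`(sign(rev) * det Wx ^ 2)⁻¹`, so the sign cancels, and the Vandermonde product over all `2n` nodes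
splits into those over `x` and over `y` and the cross product `∏ (y j - x k)`.
-/

open Matrix Finset Polynomial

section BlockDeterminant

variable {R : Type*} [CommRing R] {m : Type*} [Fintype m] [DecidableEq m]

theorem det_sq_mul_det_fromBlocks_diagonal (p q : m → R) (B D : Matrix m m R) :
    (diagonal p).det ^ 2 * (fromBlocks (diagonal p) B (diagonal q) D).det =
      (diagonal p).det ^ 2 * (diagonal p * D - diagonal q * B).det := by
  have hcomm : diagonal q * diagonal p = diagonal p * diagonal q := by
    simp only [diagonal_mul_diagonal, mul_comm]
  have hprod : fromBlocks (diagonal p) 0 (-diagonal q) (diagonal p) *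
      fromBlocks (diagonal p) B (diagonal q) D =
        fromBlocks (diagonal p * diagonal p) (diagonal p * B) 0
          (diagonal p * D - diagonal q * B) := by
    rw [fromBlocks_multiply, Matrix.neg_mul, Matrix.neg_mul, hcomm]
    simp [sub_eq_neg_add]
  have hdet := congrArg det hprod
  rw [det_mul, det_fromBlocks_zero₁₂, det_fromBlocks_zero₂₁, det_mul] at hdet
  rw [sq, hdet]

theorem det_fromBlocks_diagonal (p q : m → R) (B D : Matrix m m R) :
    (fromBlocks (diagonal p) B (diagonal q) D).det = (diagonal p * D - diagonal q * B).det := by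
  -- Replace `p` by `X + C p`: then `det (diagonal p)` is monic, hence cancellable, and the
  -- constant coefficients of both sides are the two determinants we want.
  have key := det_sq_mul_det_fromBlocks_diagonal (fun k => X + C (p k)) (fun k => C (q k))
    (B.map C) (D.map C)
  have hmonic : ((diagonal fun k => X + C (p k)).det ^ 2).Monic := by
    rw [det_diagonal]
    exact (monic_prod_of_monic _ _ fun k _ => monic_X_add_C (p k)).pow 2
  have h := congrArg (fun P => P.coeff 0) (hmonic.isRegular.left key)
  convert h using 2
  · rw [← coeff_det_X_add_C_zero (fromBlocks 1 0 0 0)]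
    congr 2
    ext (i | i) (j | j) <;> by_cases hij : i = j <;> simp [hij]
  · rw [← coeff_det_X_add_C_zero D]
    congr 2
    ext i j : 1
    simp [diagonal_mul]
    ring

end BlockDeterminant

theorem Fin.prod_prod_Ioi_add {M : Type*} [CommMonoid M] {m n : ℕ}
    (F : Fin (m + n) → Fin (m + n) → M) :
    ∏ i, ∏ j ∈ Ioi i, F i j =
      (∏ i : Fin m, ∏ j ∈ Ioi i, F (castAdd n i) (castAdd n j)) *
        (∏ i : Fin m, ∏ j : Fin n, F (castAdd n i) (natAdd m j)) *
          ∏ i : Fin n, ∏ j ∈ Ioi i, F (natAdd m i) (natAdd m j) := by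
  have hcast : ∀ i j : Fin m, castAdd n i < castAdd n j ↔ i < j := fun i j => by
    simp only [Fin.lt_def, val_castAdd]
  have hlt : ∀ (i : Fin m) (j : Fin n), castAdd n i < natAdd m j := fun i j => by
    simp only [Fin.lt_def, val_castAdd, val_natAdd]; omega
  have hnlt : ∀ (i : Fin n) (j : Fin m), ¬ natAdd m i < castAdd n j := fun i j => by
    simp only [Fin.lt_def, val_castAdd, val_natAdd]; omega
  simp_rw [← filter_lt_eq_Ioi, prod_filter, Fin.prod_univ_add]
  simp [hcast, hlt, hnlt, prod_mul_distrib, mul_assoc]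

theorem prod_prod_erase_sub_eq_det_vandermonde_mul {R : Type*} [CommRing R] {n : ℕ}
    (v : Fin n → R) :
    ∏ k, ∏ l ∈ univ.erase k, (v k - v l) =
      (vandermonde v).det * (vandermonde (v ∘ Fin.rev)).det := by
  have hsplit : ∀ k : Fin n,
      univ.erase k = (Iio k).disjUnion (Ioi k) (disjoint_Ioi_Iio k).symm := by
    intro k; ext l; simp [ne_comm]
  have hlower : ∏ k, ∏ l ∈ Iio k, (v k - v l) = (vandermonde v).det := by
    rw [det_vandermonde]
    exact prod_comm' (by simp)
  have hupper : ∏ k, ∏ l ∈ Ioi k, (v k - v l) = (vandermonde (v ∘ Fin.rev)).det := by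
    rw [det_vandermonde]
    calc ∏ k, ∏ l ∈ Ioi k, (v k - v l) = ∏ l, ∏ k ∈ Iio l, (v k - v l) := prod_comm' (by simp)
      _ = ∏ i : Fin n, ∏ j ∈ Iio i.rev, (v j - v i.rev) :=
        (Fintype.prod_equiv Fin.revPerm _ _ fun _ => rfl).symm
      _ = ∏ i : Fin n, ∏ j ∈ Ioi i, (v j.rev - v i.rev) := by
        simp_rw [← Fin.map_revPerm_Ioi, prod_map]
        rfl
  simp_rw [hsplit, prod_disjUnion, prod_mul_distrib, hlower, hupper]

section Field

variable {K : Type*} [Field K] {n : ℕ}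

theorem det_vandermonde_comp_rev (x : Fin n → K) :
    (vandermonde (x ∘ Fin.rev)).det =
      ((Equiv.Perm.sign (Fin.revPerm : Equiv.Perm (Fin n)) : ℤ) : K) * (vandermonde x).det :=
  det_permute Fin.revPerm (vandermonde x)

theorem transpose_vandermonde_mul_lagrange_basis (x y : Fin n → K) (hx : Function.Injective x) :
    (vandermonde x)ᵀ * of (fun k j => (Lagrange.basis univ x k).eval (y j)) =
      (vandermonde y)ᵀ := by
  ext i j
  have hdeg : ((X : K[X]) ^ (i : ℕ)).degree < #(univ : Finset (Fin n)) := by simp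
  have := congrArg (eval (y j)) (Lagrange.eq_interpolate hx.injOn hdeg)
  simpa [Lagrange.interpolate_apply, eval_finsetSum, mul_apply] using this.symm

theorem det_fromBlocks_vandermonde_diagonal (x y fx gx fy gy : Fin n → K)
    (hx : Function.Injective x) (hxy : ∀ k j, x k ≠ y j) :
    (fromBlocks ((vandermonde x)ᵀ * diagonal fx) ((vandermonde y)ᵀ * diagonal fy)
      ((vandermonde x)ᵀ * diagonal gx) ((vandermonde y)ᵀ * diagonal gy)).det =
    (∏ k, ∏ j, (y j - x k)) *
      (of fun i j => (fy (Fin.rev i) * gx j - fx j * gy (Fin.rev i)) /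
        (x j - y (Fin.rev i))).det := by
  set B : Matrix (Fin n) (Fin n) K := of fun k j => (Lagrange.basis univ x k).eval (y j)
  set M : Matrix (Fin n) (Fin n) K := of fun k j => (gx k * fy j - fx k * gy j) / (x k - y j)
  set s : K := ((Equiv.Perm.sign (Fin.revPerm : Equiv.Perm (Fin n)) : ℤ) : K)
  have hfactor : fromBlocks ((vandermonde x)ᵀ * diagonal fx) ((vandermonde y)ᵀ * diagonal fy)
      ((vandermonde x)ᵀ * diagonal gx) ((vandermonde y)ᵀ * diagonal gy) =
      fromBlocks (vandermonde x)ᵀ 0 0 (vandermonde x)ᵀ *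
        fromBlocks (diagonal fx) (B * diagonal fy) (diagonal gx) (B * diagonal gy) := by
    rw [fromBlocks_multiply, ← transpose_vandermonde_mul_lagrange_basis x y hx]
    simp [Matrix.mul_assoc, B]
  have hentries : diagonal fx * (B * diagonal gy) - diagonal gx * (B * diagonal fy) =
      diagonal (Lagrange.nodalWeight univ x) * M *
        diagonal fun j => (Lagrange.nodal univ x).eval (y j) := by
    ext k j
    simp only [Matrix.sub_apply, diagonal_mul, mul_diagonal, B, M, of_apply,
      Lagrange.eval_basis_not_at_node (mem_univ k) (hxy k j).symm]
    rw [← neg_sub (y j), div_neg, div_eq_mul_inv]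
    ring
  have hM : M.det = s * (of fun i j => (fy (Fin.rev i) * gx j - fx j * gy (Fin.rev i)) /
      (x j - y (Fin.rev i))).det := by
    rw [← det_transpose M, ← det_permute]
    congr 1
    ext i j
    simp only [M, transpose_apply, submatrix_apply, of_apply, Fin.revPerm_apply, Fin.rev_rev, id]
    ring
  have hweights : ∏ k, Lagrange.nodalWeight univ x k = (s * (vandermonde x).det ^ 2)⁻¹ := by
    simp_rw [Lagrange.nodalWeight, prod_inv_distrib, prod_prod_erase_sub_eq_det_vandermonde_mul,
      det_vandermonde_comp_rev]
    ring
  have hs : s ≠ 0 := by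
    rcases Int.units_eq_one_or (Equiv.Perm.sign (Fin.revPerm : Equiv.Perm (Fin n))) with h | h <;>
      simp [s, h]
  have hΔ : (vandermonde x).det ≠ 0 := det_vandermonde_ne_zero_iff.2 hx
  rw [hfactor, det_mul, det_fromBlocks_zero₂₁, det_fromBlocks_diagonal, hentries, det_mul, det_mul,
    det_diagonal, det_diagonal, hweights, hM, det_transpose]
  simp_rw [Lagrange.eval_nodal]
  rw [prod_comm]
  field_simp

theorem det_stacked_vandermonde (f g z : Fin (n + n) → K) (hz : Function.Injective z) :
    (of fun i j : Fin (n + n) =>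
        if (i : ℕ) < n then f j * z j ^ (i : ℕ) else g j * z j ^ ((i : ℕ) - n)).det =
      (∏ k : Fin n, ∏ j : Fin n, (z (Fin.natAdd n j) - z (Fin.castAdd n k))) *
        (of fun i j : Fin n =>
          (f (Fin.rev (Fin.castAdd n i)) * g (Fin.castAdd n j) -
              f (Fin.castAdd n j) * g (Fin.rev (Fin.castAdd n i))) /
            (z (Fin.castAdd n j) - z (Fin.rev (Fin.castAdd n i)))).det := by
  have hrev : ∀ i : Fin n, Fin.rev (Fin.castAdd n i) = Fin.natAdd n (Fin.rev i) := fun i =>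
    Fin.ext (by simp only [Fin.val_rev, Fin.val_castAdd, Fin.val_natAdd]; omega)
  have hblocks : (of fun i j : Fin (n + n) =>
        if (i : ℕ) < n then f j * z j ^ (i : ℕ) else g j * z j ^ ((i : ℕ) - n)).submatrix
          finSumFinEquiv finSumFinEquiv =
      fromBlocks ((vandermonde (z ∘ Fin.castAdd n))ᵀ * diagonal (f ∘ Fin.castAdd n))
        ((vandermonde (z ∘ Fin.natAdd n))ᵀ * diagonal (f ∘ Fin.natAdd n))
        ((vandermonde (z ∘ Fin.castAdd n))ᵀ * diagonal (g ∘ Fin.castAdd n))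
        ((vandermonde (z ∘ Fin.natAdd n))ᵀ * diagonal (g ∘ Fin.natAdd n)) := by
    ext (i | i) (j | j) <;> simp [mul_comm]
  rw [← det_submatrix_equiv_self finSumFinEquiv, hblocks,
    det_fromBlocks_vandermonde_diagonal (z ∘ Fin.castAdd n) (z ∘ Fin.natAdd n)
      (f ∘ Fin.castAdd n) (g ∘ Fin.castAdd n) (f ∘ Fin.natAdd n) (g ∘ Fin.natAdd n)
      (hz.comp (Fin.castAdd_injective n n)) fun k j => hz.ne (by simp [Fin.ext_iff]; omega)]
  simp [hrev]

end Field

theorem scalar_product_det_equivalence_general {K : Type*} [Field K] (n : ℕ)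
    (a d : K → K) (u : Fin (n + n) → K)
    (husq : ∀ i j, i ≠ j → u i ^ 2 ≠ u j ^ 2) :
    (∏ i : Fin (n + n), ∏ j ∈ Finset.Ioi i, (u j ^ 2 - u i ^ 2))⁻¹ *
        Matrix.det (Matrix.of fun i j : Fin (n + n) =>
          if (i : ℕ) < n then (d (u j) * u j) * u j ^ (2 * (i : ℕ))
          else (a (u j) * u j ^ (2 * n - 1)) * u j ^ (2 * ((i : ℕ) - n)))
      = (∏ j : Fin n, ∏ k ∈ Finset.Ioi j,
            ((u (Fin.castAdd n k) ^ 2 - u (Fin.castAdd n j) ^ 2) *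
              (u (Fin.natAdd n k) ^ 2 - u (Fin.natAdd n j) ^ 2)))⁻¹ *
          Matrix.det (Matrix.of fun i j : Fin n =>
            ((d (u (Fin.rev (Fin.castAdd n i))) * u (Fin.rev (Fin.castAdd n i))) *
                  (a (u (Fin.castAdd n j)) * u (Fin.castAdd n j) ^ (2 * n - 1)) -
                (d (u (Fin.castAdd n j)) * u (Fin.castAdd n j)) *
                  (a (u (Fin.rev (Fin.castAdd n i))) *
                    u (Fin.rev (Fin.castAdd n i)) ^ (2 * n - 1))) /
              (u (Fin.castAdd n j) ^ 2 - u (Fin.rev (Fin.castAdd n i)) ^ 2)) := by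
  have hz : Function.Injective fun i => u i ^ 2 := fun i j h =>
    by_contra fun hij => husq i j hij h
  have hV := det_stacked_vandermonde (fun j => d (u j) * u j)
    (fun j => a (u j) * u j ^ (2 * n - 1)) _ hz
  simp only [← pow_mul] at hV
  have hcross : ∏ k : Fin n, ∏ j : Fin n, (u (Fin.natAdd n j) ^ 2 - u (Fin.castAdd n k) ^ 2) ≠ 0 :=
    prod_ne_zero_iff.2 fun k _ => prod_ne_zero_iff.2 fun j _ =>
      sub_ne_zero.2 (hz.ne (by simp [Fin.ext_iff]; omega))
  rw [hV, Fin.prod_prod_Ioi_add]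
  simp_rw [prod_mul_distrib]
  field_simp

/-- Equivalence of the `2n×2n` and `n×n` determinant representations
of the scalar product of off-shell Bethe states.  With `ã_j = a(u_j)u_j^{2n-1}`,
`d̃_j = d(u_j)u_j`, `Q_{ij} = (d̃_{2n-i+1}ã_j - d̃_jã_{2n-i+1})/(u_j² - u_{2n-i+1}²)` and
`V_{ij} = d̃_j u_j^{2(i-1)}` (`i ≤ n`), `V_{ij} = ã_j u_j^{2(i-n-1)}` (`i > n`):
`∏_{i<j≤2n}(u_j²-u_i²)⁻¹ det V = ∏_{j<k≤n}(u_k²-u_j²)⁻¹(u_{n+k}²-u_{n+j}²)⁻¹ det Q`.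
(Indices are zero-based: `u_{2n-i+1}` becomes `u (Fin.rev (Fin.castAdd n i))`.) -/
theorem scalar_product_det_equivalence {K : Type*} [Field K] (n : ℕ)
    (a d : K → K) (u : Fin (n + n) → K) (hu0 : ∀ i, u i ≠ 0)
    (husq : ∀ i j, i ≠ j → u i ^ 2 ≠ u j ^ 2) :
    (∏ i : Fin (n + n), ∏ j ∈ Finset.Ioi i, (u j ^ 2 - u i ^ 2))⁻¹ *
        Matrix.det (Matrix.of fun i j : Fin (n + n) =>
          if (i : ℕ) < n then (d (u j) * u j) * u j ^ (2 * (i : ℕ))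
          else (a (u j) * u j ^ (2 * n - 1)) * u j ^ (2 * ((i : ℕ) - n)))
      = (∏ j : Fin n, ∏ k ∈ Finset.Ioi j,
            ((u (Fin.castAdd n k) ^ 2 - u (Fin.castAdd n j) ^ 2) *
              (u (Fin.natAdd n k) ^ 2 - u (Fin.natAdd n j) ^ 2)))⁻¹ *
          Matrix.det (Matrix.of fun i j : Fin n =>
            ((d (u (Fin.rev (Fin.castAdd n i))) * u (Fin.rev (Fin.castAdd n i))) *
                  (a (u (Fin.castAdd n j)) * u (Fin.castAdd n j) ^ (2 * n - 1)) -
                (d (u (Fin.castAdd n j)) * u (Fin.castAdd n j)) *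
                  (a (u (Fin.rev (Fin.castAdd n i))) *
                    u (Fin.rev (Fin.castAdd n i)) ^ (2 * n - 1))) /
              (u (Fin.castAdd n j) ^ 2 - u (Fin.rev (Fin.castAdd n i)) ^ 2)) :=
  scalar_product_det_equivalence_general n a d u husq
end
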